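/- arXiv:1804.05797 — 2 statements merged into one kernel-verified Lean document; each statement's English description precedes it below -/
import Mathlib

section
/- Suppose ⟦·⟧ is a compositional encoding of the λ-calculus, R is a congruence on target terms, ⟦·⟧ and R validate rule β, ⟦M⟧ R ⟦Ω⟧ for all unsolvables M of order 0, and ⟦M⟧ R ⟦Ω⟧ for all unsolvables M of order ω. Then ⟦M⟧ R ⟦Ω⟧ for every unsolvable term M (of any order n with 0 ≤ n ≤ ω). -/
/-- Untyped λ-terms in de Bruijn representation. -/
inductive Lam : Type
  | var : ℕ → Lam
  | abs : Lam → Lam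
  | app : Lam → Lam → Lam

namespace Lam

/-- Shift free indices ≥ `k` up by `d`. -/
def shift (d : ℕ) : ℕ → Lam → Lam
  | k, var n => if n < k then var n else var (n + d)
  | k, abs t => abs (shift d (k + 1) t)
  | k, app t u => app (shift d k t) (shift d k u)

/-- Capture-avoiding substitution of `s` for index `k`. -/
def subst : Lam → ℕ → Lam → Lam
  | var n, k, s => if n = k then shift k 0 s else if k < n then var (n - 1) else var n
  | abs t, k, s => abs (subst t (k + 1) s)
  | app t u, k, s => app (subst t k s) (subst u k s)

/-- `t` is a λ-abstraction. -/
def IsAbs : Lam → Prop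
  | abs _ => True
  | _ => False

/-- One-step head reduction: contraction of the head redex. -/
inductive Head : Lam → Lam → Prop
  | beta (t u : Lam) : Head (app (abs t) u) (subst t 0 u)
  | mu {t t' : Lam} (u : Lam) : ¬ IsAbs t → Head t t' → Head (app t u) (app t' u)
  | xi {t t' : Lam} : Head t t' → Head (abs t) (abs t')

/-- Reflexive-transitive closure of head reduction. -/
def HeadStar : Lam → Lam → Prop := Relation.ReflTransGen Head

/-- Terms of the shape `y M₁ … Mₙ`. -/
inductive Neutral : Lam → Prop
  | head (n : ℕ) : Neutral (var n)
  | cons {t : Lam} (u : Lam) : Neutral t → Neutral (app t u)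

/-- Head normal forms: terms of the shape `λx₁…xₖ. y M₁ … Mₙ`. -/
inductive Hnf : Lam → Prop
  | neu {t : Lam} : Neutral t → Hnf t
  | lam {t : Lam} : Hnf t → Hnf (abs t)

/-- A term is solvable if head reduction reaches a head normal form. -/
def Solvable (M : Lam) : Prop := ∃ N, HeadStar M N ∧ Hnf N

def Unsolvable (M : Lam) : Prop := ¬ Solvable M

/-- `n` iterated abstractions. -/
def absIter : ℕ → Lam → Lam
  | 0, t => t
  | n + 1, t => abs (absIter n t)

/-- Head reduction can uncover at least `n` leading abstractions. -/
def UnravelsTo (M : Lam) (n : ℕ) : Prop := ∃ N, HeadStar M (absIter n N)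

/-- `M` is unsolvable of (finite) order `n`. -/
def UnsOrder (M : Lam) (n : ℕ) : Prop :=
  Unsolvable M ∧ UnravelsTo M n ∧ ¬ UnravelsTo M (n + 1)

/-- `M` is unsolvable of order `ω`. -/
def UnsOrderOmega (M : Lam) : Prop := Unsolvable M ∧ ∀ n, UnravelsTo M n

/-- The purely divergent term `Ω = (λx.xx)(λx.xx)`. -/
def Omega : Lam := app (abs (app (var 0) (var 0))) (abs (app (var 0) (var 0)))

/-- Call-by-name reduction: rules β and μ. -/
inductive Cbn : Lam → Lam → Prop
  | beta (t u : Lam) : Cbn (app (abs t) u) (subst t 0 u)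
  | mu {t t' : Lam} (u : Lam) : Cbn t t' → Cbn (app t u) (app t' u)

end Lam

open Lam

/-!
Pull `R` back along the encoding to an equivalence `S` on λ-terms. Since `S` contains β and is
compatible with abstraction and with application on the left, it contains head reduction.
An unsolvable of order `n + 1` head-reduces to `λ.P` with `P` unsolvable of order `n`, so by
induction it suffices to know `λ.Ω S Ω`. This comes from the order-`ω` term
`Ωₖ = (λxy.xx)(λxy.xx)`, which head-reduces to `λ.Ωₖ`: from `Ωₖ S Ω` we get
`λ.Ω S λ.Ωₖ S Ωₖ S Ω`. Every unsolvable has either a finite order or order `ω`.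
-/

namespace Lam

theorem HeadStar.abs {t u : Lam} (h : HeadStar t u) : HeadStar (abs t) (abs u) :=
  Relation.ReflTransGen.lift (r := Head) (p := Head) Lam.abs (fun _ _ h => Head.xi h) _ _ h

theorem Head.le_of_closed {S : Lam → Lam → Prop}
    (hβ : ∀ t u, S (app (abs t) u) (subst t 0 u))
    (hμ : ∀ {t t'} u, S t t' → S (app t u) (app t' u))
    (hξ : ∀ {t t'}, S t t' → S (abs t) (abs t')) :
    Head ≤ S := by
  intro A B h
  induction h with
  | beta t u => exact hβ t u
  | mu u _ _ ih => exact hμ u ih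
  | xi _ ih => exact hξ ih

theorem unravelsTo_zero (M : Lam) : UnravelsTo M 0 :=
  ⟨M, .refl⟩

theorem UnsOrder.exists_headStar_abs {M : Lam} {n : ℕ} (h : UnsOrder M (n + 1)) :
    ∃ P, HeadStar M (abs P) ∧ UnsOrder P n := by
  obtain ⟨huns, ⟨N, hM⟩, hnot⟩ := h
  refine ⟨absIter n N, hM, ?_, ⟨N, .refl⟩, ?_⟩
  · rintro ⟨H, hH, hnf⟩
    exact huns ⟨abs H, hM.trans hH.abs, hnf.lam⟩
  · rintro ⟨Q, hQ⟩
    exact hnot ⟨Q, hM.trans hQ.abs⟩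

theorem Unsolvable.unsOrder_or_unsOrderOmega {M : Lam} (h : Unsolvable M) :
    (∃ n, UnsOrder M n) ∨ UnsOrderOmega M := by
  by_cases hall : ∀ n, UnravelsTo M n
  · exact .inr ⟨h, hall⟩
  left
  obtain ⟨k, hk⟩ := not_forall.mp hall
  obtain ⟨m, rfl⟩ : ∃ m, k = m + 1 :=
    Nat.exists_eq_succ_of_ne_zero (by rintro rfl; exact hk (unravelsTo_zero M))
  classical
  have hex : ∃ n, ¬ UnravelsTo M (n + 1) := ⟨m, hk⟩
  refine ⟨Nat.find hex, h, ?_, Nat.find_spec hex⟩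
  rcases hn : Nat.find hex with _ | n
  · exact unravelsTo_zero M
  · exact not_not.mp (Nat.find_min hex (m := n) (by omega))

def dupK : Lam := abs (abs (app (var 1) (var 1)))

def OmegaK : Lam := app dupK dupK

theorem head_OmegaK : Head OmegaK (abs OmegaK) :=
  Head.beta (abs (app (var 1) (var 1))) dupK

theorem Head.exists_eq_absIter_OmegaK {k : ℕ} {u : Lam} (h : Head (absIter k OmegaK) u) :
    ∃ k', u = absIter k' OmegaK := by
  induction k generalizing u with
  | zero =>
    cases h with
    | beta => exact ⟨1, rfl⟩
    | mu _ hna _ => exact absurd trivial hna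
  | succ k ih =>
    cases h with
    | xi h =>
      obtain ⟨k', rfl⟩ := ih h
      exact ⟨k' + 1, rfl⟩

theorem HeadStar.exists_eq_absIter_OmegaK {u : Lam} (h : HeadStar OmegaK u) :
    ∃ k, u = absIter k OmegaK := by
  induction h with
  | refl => exact ⟨0, rfl⟩
  | tail _ hstep ih =>
    obtain ⟨k, rfl⟩ := ih
    exact hstep.exists_eq_absIter_OmegaK

theorem not_hnf_absIter_OmegaK (k : ℕ) : ¬ Hnf (absIter k OmegaK) := by
  induction k with
  | zero =>
    rintro (⟨_ | ⟨_, hK⟩⟩ | ⟨⟩)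
    cases hK
  | succ k ih => rintro (⟨⟨⟩⟩ | h); exact ih h

theorem unsOrderOmega_OmegaK : UnsOrderOmega OmegaK := by
  refine ⟨?_, fun n => ⟨OmegaK, ?_⟩⟩
  · rintro ⟨N, hN, hnf⟩
    obtain ⟨k, rfl⟩ := hN.exists_eq_absIter_OmegaK
    exact not_hnf_absIter_OmegaK k hnf
  · induction n with
    | zero => exact .refl
    | succ n ih => exact .head head_OmegaK ih.abs

section Closed

variable {S : Lam → Lam → Prop}

theorem rel_abs_Omega (hS : Equivalence S) (hhead : Head ≤ S)
    (hξ : ∀ {t t'}, S t t' → S (abs t) (abs t')) (hK : S OmegaK Omega) :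
    S (abs Omega) Omega :=
  hS.trans (hξ (hS.symm hK)) (hS.trans (hS.symm (hhead _ _ head_OmegaK)) hK)

theorem UnsOrder.rel_Omega (hS : Equivalence S) (hstar : HeadStar ≤ S)
    (hξ : ∀ {t t'}, S t t' → S (abs t) (abs t')) (habs : S (abs Omega) Omega)
    (hzero : ∀ M, UnsOrder M 0 → S M Omega) {M : Lam} {n : ℕ} (hM : UnsOrder M n) :
    S M Omega := by
  induction n generalizing M with
  | zero => exact hzero M hM
  | succ n ih =>
    obtain ⟨P, hMP, hP⟩ := hM.exists_headStar_abs
    exact hS.trans (hstar _ _ hMP) (hS.trans (hξ (ih hP)) habs)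

end Closed

end Lam

theorem unsolvable_encoding_omega_general
    {T : Type} (enc : Lam → T) (R : T → T → Prop)
    (Ctxs : Set (T → T))
    (hequiv : Equivalence R)
    (hcong : ∀ c ∈ Ctxs, ∀ p q, R p q → R (c p) (c q))
    (Cl : T → T) (hCl : Cl ∈ Ctxs)
    (Ca : T → T → T)
    (hCa1 : ∀ q, (fun p => Ca p q) ∈ Ctxs)
    (hlam : ∀ M, enc (Lam.abs M) = Cl (enc M))
    (happ : ∀ M N, enc (Lam.app M N) = Ca (enc M) (enc N))
    (hbeta : ∀ M N, R (enc (Lam.app (Lam.abs M) N)) (enc (Lam.subst M 0 N)))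
    (hzero : ∀ M, UnsOrder M 0 → R (enc M) (enc Omega))
    (homega : ∀ M, UnsOrderOmega M → R (enc M) (enc Omega)) :
    ∀ M : Lam, Unsolvable M → R (enc M) (enc Omega) := by
  intro M hM
  have hS : Equivalence (Function.onFun R enc) := hequiv.comap enc
  have hξ : ∀ {t t'}, R (enc t) (enc t') → R (enc (Lam.abs t)) (enc (Lam.abs t')) :=
    fun h => by simpa only [hlam] using hcong Cl hCl _ _ h
  have hμ : ∀ {t t'} u, R (enc t) (enc t') → R (enc (Lam.app t u)) (enc (Lam.app t' u)) :=
    fun u h => by simpa only [happ] using hcong _ (hCa1 (enc u)) _ _ h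
  have hhead : Head ≤ Function.onFun R enc := Head.le_of_closed hbeta hμ hξ
  have hstar : HeadStar ≤ Function.onFun R enc :=
    Relation.reflTransGen_le_of_equivalence_of_le hS hhead
  have habs : R (enc (Lam.abs Omega)) (enc Omega) :=
    rel_abs_Omega hS hhead hξ (homega OmegaK unsOrderOmega_OmegaK)
  rcases hM.unsOrder_or_unsOrderOmega with ⟨n, hn⟩ | hω
  · exact hn.rel_Omega hS hstar hξ habs hzero
  · exact homega M hω

/-- If a compositional encoding and a congruence `R` validate rule β, and the
encodings of all unsolvables of order 0 and of order ω are related to `⟦Ω⟧`,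
then the encoding of every unsolvable is related to `⟦Ω⟧`. -/
theorem unsolvable_encoding_omega
    {T : Type} (enc : Lam → T) (R : T → T → Prop)
    (Ctxs : Set (T → T))
    (hequiv : Equivalence R)
    (hcong : ∀ c ∈ Ctxs, ∀ p q, R p q → R (c p) (c q))
    (Cl : T → T) (hCl : Cl ∈ Ctxs)
    (Ca : T → T → T)
    (hCa1 : ∀ q, (fun p => Ca p q) ∈ Ctxs)
    (hCa2 : ∀ p, (fun q => Ca p q) ∈ Ctxs)
    (hlam : ∀ M, enc (Lam.abs M) = Cl (enc M))
    (happ : ∀ M N, enc (Lam.app M N) = Ca (enc M) (enc N))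
    (hbeta : ∀ M N, R (enc (Lam.app (Lam.abs M) N)) (enc (Lam.subst M 0 N)))
    (hzero : ∀ M, UnsOrder M 0 → R (enc M) (enc Omega))
    (homega : ∀ M, UnsOrderOmega M → R (enc M) (enc Omega)) :
    ∀ M : Lam, Unsolvable M → R (enc M) (enc Omega) :=
  unsolvable_encoding_omega_general enc R Ctxs hequiv hcong Cl hCl Ca hCa1 hlam happ hbeta hzero
    homega
end

section
/- Suppose ⟦·⟧ is a compositional encoding, R a congruence validating rule β with ⟦·⟧, such that any two unsolvables of order 0 have R-related encodings and any two unsolvables of order ω have R-related encodings. Then for every n (0 ≤ n ≤ ω), any two unsolvables of order n have R-related encodings. -/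
open Lam

/-- If a compositional encoding and a congruence `R` validate rule β, and any two
unsolvables of order 0 (resp. of order ω) have `R`-related encodings, then for
every order `n` (`0 ≤ n ≤ ω`) any two unsolvables of order `n` have `R`-related
encodings. -/
theorem unsolvable_same_order_encoding
    {T : Type} (enc : Lam → T) (R : T → T → Prop)
    (Ctxs : Set (T → T))
    (hequiv : Equivalence R)
    (hcong : ∀ c ∈ Ctxs, ∀ p q, R p q → R (c p) (c q))
    (Cl : T → T) (hCl : Cl ∈ Ctxs)
    (Ca : T → T → T)
    (hCa1 : ∀ q, (fun p => Ca p q) ∈ Ctxs)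
    (hCa2 : ∀ p, (fun q => Ca p q) ∈ Ctxs)
    (hlam : ∀ M, enc (Lam.abs M) = Cl (enc M))
    (happ : ∀ M N, enc (Lam.app M N) = Ca (enc M) (enc N))
    (hbeta : ∀ M N, R (enc (Lam.app (Lam.abs M) N)) (enc (Lam.subst M 0 N)))
    (hzero : ∀ M N, UnsOrder M 0 → UnsOrder N 0 → R (enc M) (enc N))
    (homega : ∀ M N, UnsOrderOmega M → UnsOrderOmega N → R (enc M) (enc N)) :
    (∀ (n : ℕ) (M N : Lam), UnsOrder M n → UnsOrder N n → R (enc M) (enc N)) ∧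
    (∀ M N : Lam, UnsOrderOmega M → UnsOrderOmega N → R (enc M) (enc N)) := by
  have hstep : ∀ {M M' : Lam}, Head M M' → R (enc M) (enc M') := by
    intro M M' h
    induction h with
    | beta t u => exact hbeta t u
    | @mu t t' u _ _ ih =>
        rw [happ, happ]
        exact hcong _ (hCa1 (enc u)) _ _ ih
    | xi _ ih =>
        rw [hlam, hlam]
        exact hcong _ hCl _ _ ih
  have hstar : ∀ {M M' : Lam}, HeadStar M M' → R (enc M) (enc M') := by
    intro M M' h
    induction h with
    | refl => exact hequiv.refl _
    | tail _ h2 ih => exact hequiv.trans ih (hstep h2)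
  have absStar : ∀ {t t' : Lam}, HeadStar t t' → HeadStar (abs t) (abs t') := by
    intro t t' h
    induction h with
    | refl => exact Relation.ReflTransGen.refl
    | tail _ h2 ih => exact ih.tail (Head.xi h2)
  have key : ∀ (n : ℕ) (M N : Lam), UnsOrder M n → UnsOrder N n → R (enc M) (enc N) := by
    intro n
    induction n with
    | zero => exact hzero
    | succ k ih =>
        have ord : ∀ (M P : Lam), Unsolvable M → HeadStar M (absIter (k+1) P) →
            ¬ UnravelsTo M (k+2) → UnsOrder (absIter k P) k := by
          intro M P hMu hP hM2
          refine ⟨?_, ⟨P, Relation.ReflTransGen.refl⟩, ?_⟩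
          · rintro ⟨h, hs, hh⟩
            exact hMu ⟨abs h, hP.trans (absStar hs), Hnf.lam hh⟩
          · rintro ⟨P', hP'⟩
            exact hM2 ⟨P', hP.trans (absStar hP')⟩
        intro M N hM hN
        obtain ⟨hMu, ⟨P, hP⟩, hM2⟩ := hM
        obtain ⟨hNu, ⟨Q, hQ⟩, hN2⟩ := hN
        have h3 := ih _ _ (ord M P hMu hP hM2) (ord N Q hNu hQ hN2)
        have h1 : R (enc M) (enc (abs (absIter k P))) := hstar hP
        have h2 : R (enc N) (enc (abs (absIter k Q))) := hstar hQ
        rw [hlam] at h1 h2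
        exact hequiv.trans h1 (hequiv.trans (hcong _ hCl _ _ h3) (hequiv.symm h2))
  exact ⟨key, homega⟩
end
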